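/- Let x, y : Fin n → ℝᵈ, let h, g : ℝ → ℝ be strictly antitone functions, and suppose y i = s • (W (x i)) + t for all i with s ≠ 0, W orthogonal, and t ∈ ℝᵈ. Define p over pairs (i,j) with i < j by p (i,j) = h ‖x i - x j‖, and q (i,j) = g ‖y i - y j‖, and let R_p, R_q denote their rank functions (rank of a pair = number of pairs with value ≤ its value). Suppose the sample variance of R_p is positive. Then the Spearman rank correlation T(R_p, R_q) = 1. -/

import Mathlib

open scoped Classical

/-- The rank of an entry of a finite real sequence: the number of entries `≤` it. -/
noncomputable def rankOf {α : Type*} [Fintype α] (v : α → ℝ) (r : α) : ℝ :=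
  ((Finset.univ.filter (fun l => v l ≤ v r)).card : ℝ)

/-- The sample mean of a finite sequence. -/
noncomputable def sampleMean {α : Type*} [Fintype α] (R : α → ℝ) : ℝ :=
  (∑ k, R k) / (Fintype.card α)

/-- The (biased) sample variance of a finite sequence. -/
noncomputable def sampleVar {α : Type*} [Fintype α] (R : α → ℝ) : ℝ :=
  (∑ k, (R k - sampleMean R) ^ 2) / (Fintype.card α)

/-- The sample covariance of two finite sequences. -/
noncomputable def sampleCov {α : Type*} [Fintype α] (R S : α → ℝ) : ℝ :=
  (∑ k, (R k - sampleMean R) * (S k - sampleMean S)) / (Fintype.card α)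

/-- The sample (Pearson) correlation of two finite sequences; applied to rank sequences
this is the Spearman rank correlation. -/
noncomputable def sampleCorr {α : Type*} [Fintype α] (R S : α → ℝ) : ℝ :=
  sampleCov R S / (Real.sqrt (sampleVar R) * Real.sqrt (sampleVar S))

/-
A similarity transformation scales all pairwise distances by the same factor `|s| > 0`, so
`p` and `q` are both strictly antitone functions of the same distances and hence induce the
same order on the pairs. Their rank sequences therefore coincide, and the correlation of a
sequence of positive variance with itself is `1`.
-/

section SampleStatistics

variable {α : Type*} [Fintype α]

theorem rankOf_eq_of_le_iff {v w : α → ℝ} (hvw : ∀ a b, v a ≤ v b ↔ w a ≤ w b) :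
    rankOf v = rankOf w := by
  funext r
  simp only [rankOf, hvw]

theorem sampleCov_self (R : α → ℝ) : sampleCov R R = sampleVar R := by
  simp only [sampleCov, sampleVar, sq]

theorem sampleCorr_self {R : α → ℝ} (hR : 0 < sampleVar R) : sampleCorr R R = 1 := by
  rw [sampleCorr, sampleCov_self, Real.mul_self_sqrt hR.le, div_self hR.ne']

end SampleStatistics

theorem norm_sub_similarity {E F : Type*} [SeminormedAddCommGroup E] [NormedSpace ℝ E]
    [SeminormedAddCommGroup F] [NormedSpace ℝ F] (W : E →ₗᵢ[ℝ] F) (s : ℝ) (t : F) (a b : E) :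
    ‖(s • W a + t) - (s • W b + t)‖ = |s| * ‖a - b‖ := by
  rw [add_sub_add_right_eq_sub, ← smul_sub, ← map_sub, norm_smul, W.norm_map, Real.norm_eq_abs]

/-- Validity direction of the test: under the null hypothesis that the latent positions
are related by a similarity transformation, the Spearman rank correlation between the
two edge-probability sequences (indexed by pairs `i < j`) equals exactly 1. -/
theorem spearman_eq_one_under_null
    {n d : ℕ} (x y : Fin n → EuclideanSpace ℝ (Fin d))
    (h g : ℝ → ℝ) (hh : StrictAnti h) (hg : StrictAnti g)
    (s : ℝ) (hs : s ≠ 0)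
    (W : EuclideanSpace ℝ (Fin d) →ₗᵢ[ℝ] EuclideanSpace ℝ (Fin d))
    (t : EuclideanSpace ℝ (Fin d))
    (hy : ∀ i, y i = s • W (x i) + t)
    (p q : {e : Fin n × Fin n // e.1 < e.2} → ℝ)
    (hp : ∀ e, p e = h ‖x e.1.1 - x e.1.2‖)
    (hq : ∀ e, q e = g ‖y e.1.1 - y e.1.2‖)
    (hvar : 0 < sampleVar (rankOf p)) :
    sampleCorr (rankOf p) (rankOf q) = 1 := by
  have hscale : StrictMono (|s| * ·) := strictMono_mul_left_of_pos (abs_pos.mpr hs)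
  have hsame_order : ∀ e e', p e ≤ p e' ↔ q e ≤ q e' := by
    intro e e'
    simp only [hp, hq, hy, norm_sub_similarity, hg.le_iff_ge, hh.le_iff_ge, hscale.le_iff_le]
  rw [← rankOf_eq_of_le_iff hsame_order, sampleCorr_self hvar]
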